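/- arXiv:2305.06811 — 3 statements merged into one kernel-verified Lean document; each statement's English description precedes it below -/
import Mathlib

section
/- Let $\psi_1, \psi_2 > 0$ and $d > 0$. Define $\hat{v}_1 = \frac{\psi_1^3 \psi_2}{(\psi_1^2+\psi_2^2)^2}\left(\sqrt{d(\psi_1^2+\psi_2^2) + \tfrac{1}{4}\psi_1^2\psi_2^2 d^2} + \tfrac{d}{2}\psi_1\psi_2\right) - \frac{\psi_2^2}{\psi_1^2+\psi_2^2}$ and symmetrically $\hat{v}_2$ with the roles of $\psi_1, \psi_2$ exchanged. Then $(\hat{v}_1, \hat{v}_2)$ satisfies the system $\hat{v}_1 = \psi_1\sqrt{d}\sqrt{1+\hat{v}_2} - (1+\hat{v}_2)$ and $\hat{v}_2 = \psi_2\sqrt{d}\sqrt{1+\hat{v}_1} - (1+\hat{v}_1)$. -/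
/-- The closed-form unrestricted equilibrium valuations of a heterogeneous
two-path market satisfy the mutual best-response system. -/
theorem two_path_equilibrium_formulas
    (ψ₁ ψ₂ d : ℝ) (hψ₁ : 0 < ψ₁) (hψ₂ : 0 < ψ₂) (hd : 0 < d)
    (v₁ v₂ : ℝ)
    (hv₁ : v₁ = ψ₁ ^ 3 * ψ₂ / (ψ₁ ^ 2 + ψ₂ ^ 2) ^ 2 *
        (Real.sqrt (d * (ψ₁ ^ 2 + ψ₂ ^ 2) + (1 / 4) * ψ₁ ^ 2 * ψ₂ ^ 2 * d ^ 2) +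
          d / 2 * ψ₁ * ψ₂) - ψ₂ ^ 2 / (ψ₁ ^ 2 + ψ₂ ^ 2))
    (hv₂ : v₂ = ψ₂ ^ 3 * ψ₁ / (ψ₂ ^ 2 + ψ₁ ^ 2) ^ 2 *
        (Real.sqrt (d * (ψ₂ ^ 2 + ψ₁ ^ 2) + (1 / 4) * ψ₂ ^ 2 * ψ₁ ^ 2 * d ^ 2) +
          d / 2 * ψ₂ * ψ₁) - ψ₁ ^ 2 / (ψ₂ ^ 2 + ψ₁ ^ 2)) :
    0 ≤ 1 + v₁ ∧ 0 ≤ 1 + v₂ ∧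
    v₁ = ψ₁ * Real.sqrt d * Real.sqrt (1 + v₂) - (1 + v₂) ∧
    v₂ = ψ₂ * Real.sqrt d * Real.sqrt (1 + v₁) - (1 + v₁) := by
  have hA0 : (0:ℝ) < ψ₁ ^ 2 + ψ₂ ^ 2 := by positivity
  have harg : d * (ψ₂ ^ 2 + ψ₁ ^ 2) + (1 / 4) * ψ₂ ^ 2 * ψ₁ ^ 2 * d ^ 2
      = d * (ψ₁ ^ 2 + ψ₂ ^ 2) + (1 / 4) * ψ₁ ^ 2 * ψ₂ ^ 2 * d ^ 2 := by ring
  have hord : d / 2 * ψ₂ * ψ₁ = d / 2 * ψ₁ * ψ₂ := by ring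
  have harg2 : (ψ₂ ^ 2 + ψ₁ ^ 2) = (ψ₁ ^ 2 + ψ₂ ^ 2) := by ring
  rw [harg, hord, harg2] at hv₂
  set S : ℝ := Real.sqrt (d * (ψ₁ ^ 2 + ψ₂ ^ 2) + (1 / 4) * ψ₁ ^ 2 * ψ₂ ^ 2 * d ^ 2)
    with hSdef
  have hSnn : 0 ≤ S := Real.sqrt_nonneg _
  have hS2 : S ^ 2 = d * (ψ₁ ^ 2 + ψ₂ ^ 2) + (1 / 4) * ψ₁ ^ 2 * ψ₂ ^ 2 * d ^ 2 := by
    rw [hSdef]; rw [Real.sq_sqrt]; positivity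
  set t : ℝ := S + d / 2 * ψ₁ * ψ₂ with htdef
  have ht0 : 0 < t := by positivity
  have ht2 : t ^ 2 = d * ((ψ₁ ^ 2 + ψ₂ ^ 2) + ψ₁ * ψ₂ * t) := by
    rw [htdef]; nlinarith [hS2]
  clear_value S
  clear_value t
  clear hSdef htdef hS2 harg harg2 hord hSnn
  have hsd : Real.sqrt d ^ 2 = d := Real.sq_sqrt hd.le
  have hsd0 : 0 < Real.sqrt d := Real.sqrt_pos.mpr hd
  have h1 : 1 + v₁ = ψ₁ ^ 2 * t ^ 2 / (d * (ψ₁ ^ 2 + ψ₂ ^ 2) ^ 2) := by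
    rw [hv₁, ht2]; field_simp; ring
  have h2 : 1 + v₂ = ψ₂ ^ 2 * t ^ 2 / (d * (ψ₁ ^ 2 + ψ₂ ^ 2) ^ 2) := by
    rw [hv₂, ht2]; field_simp; ring
  have hsq1 : Real.sqrt (1 + v₁) = ψ₁ * t / (Real.sqrt d * (ψ₁ ^ 2 + ψ₂ ^ 2)) := by
    rw [h1]
    have h : ψ₁ ^ 2 * t ^ 2 / (d * (ψ₁ ^ 2 + ψ₂ ^ 2) ^ 2)
        = (ψ₁ * t / (Real.sqrt d * (ψ₁ ^ 2 + ψ₂ ^ 2))) ^ 2 := by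
      rw [div_pow, mul_pow, mul_pow, hsd]
    rw [h, Real.sqrt_sq (by positivity)]
  have hsq2 : Real.sqrt (1 + v₂) = ψ₂ * t / (Real.sqrt d * (ψ₁ ^ 2 + ψ₂ ^ 2)) := by
    rw [h2]
    have h : ψ₂ ^ 2 * t ^ 2 / (d * (ψ₁ ^ 2 + ψ₂ ^ 2) ^ 2)
        = (ψ₂ * t / (Real.sqrt d * (ψ₁ ^ 2 + ψ₂ ^ 2))) ^ 2 := by
      rw [div_pow, mul_pow, mul_pow, hsd]
    rw [h, Real.sqrt_sq (by positivity)]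
  have hc1 : ψ₁ * Real.sqrt d * (ψ₂ * t / (Real.sqrt d * (ψ₁ ^ 2 + ψ₂ ^ 2)))
      = ψ₁ * ψ₂ * t / (ψ₁ ^ 2 + ψ₂ ^ 2) := by
    field_simp
  have hc2 : ψ₂ * Real.sqrt d * (ψ₁ * t / (Real.sqrt d * (ψ₁ ^ 2 + ψ₂ ^ 2)))
      = ψ₂ * ψ₁ * t / (ψ₁ ^ 2 + ψ₂ ^ 2) := by
    field_simp
  refine ⟨by rw [h1]; positivity, by rw [h2]; positivity, ?_, ?_⟩
  · rw [hsq2, hc1, h2, hv₁, ht2]; field_simp; ring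
  · rw [hsq1, hc2, h1, hv₂, ht2]; field_simp; ring
end

section
/- Let $\psi_1, \psi_2 > 0$ be fixed. Define $\Delta(d) = \frac{\psi_1\psi_2}{\psi_1^2+\psi_2^2}\left(\sqrt{d(\psi_1^2+\psi_2^2) + \tfrac{1}{4}\psi_1^2\psi_2^2 d^2} + \tfrac{d}{2}\psi_1\psi_2\right) - \sqrt{d(\psi_1^2+\psi_2^2)} + 1$. Then $\Delta(d) \to \infty$ as $d \to \infty$; in particular there exists $d_0$ such that $\Delta(d) > 0$ for all $d \geq d_0$. -/
private lemma sqrt_tendsto_atTop' : Filter.Tendsto Real.sqrt Filter.atTop Filter.atTop := by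
  rw [Filter.tendsto_atTop_atTop]
  intro b
  refine ⟨max 0 (b ^ 2), fun a ha => ?_⟩
  have h0 : (0 : ℝ) ≤ a := le_trans (le_max_left _ _) ha
  rcases le_or_gt b 0 with hb | hb
  · exact le_trans hb (Real.sqrt_nonneg a)
  · rw [Real.le_sqrt hb.le h0]
    exact le_trans (le_max_right _ _) ha


/-- The competitive-minus-monopoly network-valuation gap tends to infinity
with the demand limit; in particular it is eventually positive. -/
theorem competition_gap_tendsto_atTop
    (ψ₁ ψ₂ : ℝ) (hψ₁ : 0 < ψ₁) (hψ₂ : 0 < ψ₂)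
    (Δ : ℝ → ℝ)
    (hΔ : ∀ d, Δ d = ψ₁ * ψ₂ / (ψ₁ ^ 2 + ψ₂ ^ 2) *
        (Real.sqrt (d * (ψ₁ ^ 2 + ψ₂ ^ 2) + (1 / 4) * ψ₁ ^ 2 * ψ₂ ^ 2 * d ^ 2) +
          d / 2 * ψ₁ * ψ₂) - Real.sqrt (d * (ψ₁ ^ 2 + ψ₂ ^ 2)) + 1) :
    Filter.Tendsto Δ Filter.atTop Filter.atTop ∧
    ∃ d₀ : ℝ, ∀ d ≥ d₀, 0 < Δ d := by
  set S : ℝ := ψ₁ ^ 2 + ψ₂ ^ 2 with hS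
  set a : ℝ := ψ₁ * ψ₂ with ha
  have hSpos : 0 < S := by positivity
  have hapos : 0 < a := by positivity
  have hcpos : 0 < a ^ 2 / S := by positivity
  -- lower bound function
  set g : ℝ → ℝ := fun d => Real.sqrt d * (a ^ 2 / S * Real.sqrt d - Real.sqrt S) + 1
    with hg
  have hgT : Filter.Tendsto g Filter.atTop Filter.atTop := by
    apply Filter.Tendsto.atTop_add _ tendsto_const_nhds
    apply Filter.Tendsto.atTop_mul_atTop₀ sqrt_tendsto_atTop'
    apply Filter.Tendsto.atTop_add _ tendsto_const_nhds
    exact (sqrt_tendsto_atTop'.const_mul_atTop hcpos)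
  have hle : ∀ d : ℝ, 0 ≤ d → g d ≤ Δ d := by
    intro d hd
    have h1 : (1 / 2 : ℝ) * a * d ≤
        Real.sqrt (d * S + (1 / 4) * ψ₁ ^ 2 * ψ₂ ^ 2 * d ^ 2) := by
      have : (1 / 2 : ℝ) * a * d = Real.sqrt ((1 / 4) * ψ₁ ^ 2 * ψ₂ ^ 2 * d ^ 2) := by
        rw [show (1 / 4 : ℝ) * ψ₁ ^ 2 * ψ₂ ^ 2 * d ^ 2 = ((1 / 2 : ℝ) * a * d) ^ 2 by ring]
        rw [Real.sqrt_sq (by positivity)]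
      rw [this]
      apply Real.sqrt_le_sqrt
      nlinarith [mul_nonneg hd hSpos.le]
    have h2 : Real.sqrt (d * S) = Real.sqrt d * Real.sqrt S := Real.sqrt_mul hd S
    have h3 : Real.sqrt d * Real.sqrt d = d := Real.mul_self_sqrt hd
    have h4 : a / S * ((1 / 2 : ℝ) * a * d + d / 2 * ψ₁ * ψ₂) ≤
        a / S * (Real.sqrt (d * S + (1 / 4) * ψ₁ ^ 2 * ψ₂ ^ 2 * d ^ 2) + d / 2 * ψ₁ * ψ₂) := by
      apply mul_le_mul_of_nonneg_left _ (by positivity)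
      linarith
    rw [hΔ, hg]
    simp only
    rw [h2]
    have h5 : a ^ 2 / S * (Real.sqrt d * Real.sqrt d) = a ^ 2 / S * d := by rw [h3]
    have h6 : a / S * ((1 / 2 : ℝ) * a * d + d / 2 * ψ₁ * ψ₂) = a ^ 2 / S * d := by
      rw [ha]; ring
    have h7 : Real.sqrt d * (a ^ 2 / S * Real.sqrt d - Real.sqrt S) =
        a ^ 2 / S * (Real.sqrt d * Real.sqrt d) - Real.sqrt d * Real.sqrt S := by ring
    linarith
  refine ⟨Filter.tendsto_atTop_mono' _ ?_ hgT, ?_⟩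
  · filter_upwards [Filter.eventually_ge_atTop (0 : ℝ)] with d hd using hle d hd
  · have := Filter.tendsto_atTop.mp (Filter.tendsto_atTop_mono' _
      (by filter_upwards [Filter.eventually_ge_atTop (0 : ℝ)] with d hd using hle d hd) hgT) 1
    rcases Filter.eventually_atTop.mp this with ⟨d₀, hd₀⟩
    exact ⟨d₀, fun d hd => lt_of_lt_of_le one_pos (hd₀ d hd)⟩
end

section
/- Let $\psi > 0$, $d > 0$, and let $\hat{v}^+ \geq 0$ be the unique nonnegative fixed point of $f(v) = \psi\sqrt{d}\sqrt{1+v} - (1+v)$ with both paths symmetric ($\psi_1 = \psi_2 = \psi$). Then for all $v \geq 0$: $f(f(v)) \leq v$ if and only if $v \geq \hat{v}^+$ (whenever $f(v) \geq -1$ so the composition is defined). -/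
/-!
Write `c = ψ √d` and `f v = c √(1 + v) - (1 + v)`. Since `1 + v + f v = c √(1 + v)`, the inequality
`f (f v) ≤ v` reads `c √(1 + f v) ≤ c √(1 + v)`, i.e. `f v ≤ v`. In the variable `u = √(1 + v)`
the inequality `f v ≤ v` becomes `2 u² - c u - 1 ≥ 0`; this quadratic has roots of opposite signs,
its positive root is `√(1 + v̂⁺)`, so the inequality holds exactly when `v ≥ v̂⁺`.
-/

open Real

noncomputable def bestResponse (c v : ℝ) : ℝ := c * √(1 + v) - (1 + v)

lemma add_bestResponse (c v : ℝ) : 1 + v + bestResponse c v = c * √(1 + v) := by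
  rw [bestResponse]; ring

lemma bestResponse_bestResponse_le_iff {c v : ℝ} (hc : 0 < c) (hv : -1 ≤ v) :
    bestResponse c (bestResponse c v) ≤ v ↔ bestResponse c v ≤ v := by
  have key : bestResponse c (bestResponse c v) ≤ v ↔
      c * √(1 + bestResponse c v) ≤ c * √(1 + v) := by
    rw [← add_bestResponse c v, bestResponse]
    constructor <;> intro h <;> linarith
  rw [key, mul_le_mul_iff_right₀ hc, sqrt_le_sqrt_iff (by linarith)]
  exact add_le_add_iff_left 1

lemma mul_le_two_mul_sq_sub_one_iff {c u w : ℝ} (hu : 0 ≤ u) (hw : 0 ≤ w)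
    (hroot : c * w = 2 * w ^ 2 - 1) : c * u ≤ 2 * u ^ 2 - 1 ↔ w ≤ u := by
  have hw_pos : 0 < w := hw.lt_of_ne (by rintro rfl; linarith)
  have factor : w * (2 * u ^ 2 - 1 - c * u) = (u - w) * (2 * u * w + 1) := by
    linear_combination -u * hroot
  calc c * u ≤ 2 * u ^ 2 - 1 ↔ 0 ≤ w * (2 * u ^ 2 - 1 - c * u) := by
        rw [mul_nonneg_iff_of_pos_left hw_pos, sub_nonneg]
    _ ↔ 0 ≤ u - w := by rw [factor, mul_nonneg_iff_of_pos_right (by positivity)]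
    _ ↔ w ≤ u := sub_nonneg

lemma bestResponse_le_self_iff {c p v : ℝ} (hp : -1 ≤ p) (hfix : bestResponse c p = p)
    (hv : -1 ≤ v) : bestResponse c v ≤ v ↔ p ≤ v := by
  have hsq_v : √(1 + v) ^ 2 = 1 + v := sq_sqrt (by linarith)
  have hsq_p : √(1 + p) ^ 2 = 1 + p := sq_sqrt (by linarith)
  have hroot : c * √(1 + p) = 2 * √(1 + p) ^ 2 - 1 := by
    rw [bestResponse] at hfix; linarith
  have hquad : bestResponse c v ≤ v ↔ c * √(1 + v) ≤ 2 * √(1 + v) ^ 2 - 1 := by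
    rw [bestResponse, hsq_v]
    constructor <;> intro h <;> linarith
  rw [hquad, mul_le_two_mul_sq_sub_one_iff (sqrt_nonneg _) (sqrt_nonneg _) hroot,
    sqrt_le_sqrt_iff (by linarith)]
  exact add_le_add_iff_left 1

theorem best_response_composition_monotone_general
    (ψ d : ℝ) (hψ : 0 < ψ) (hd : 0 < d)
    (f : ℝ → ℝ)
    (hf : ∀ v, f v = ψ * Real.sqrt d * Real.sqrt (1 + v) - (1 + v))
    (vPlus : ℝ) (hvPlus : 0 ≤ vPlus) (hfix : f vPlus = vPlus) :
    ∀ v : ℝ, 0 ≤ v → -1 ≤ f v → (f (f v) ≤ v ↔ vPlus ≤ v) := by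
  intro v hv _
  obtain rfl : f = bestResponse (ψ * √d) := funext hf
  rw [bestResponse_bestResponse_le_iff (by positivity) (by linarith),
    bestResponse_le_self_iff (by linarith) hfix (by linarith)]

/-- Monotone composition property of the symmetric two-path best-response
map: the twice-iterated best response maps a valuation below itself iff the
valuation is at least the equilibrium value. -/
theorem best_response_composition_monotone
    (ψ d : ℝ) (hψ : 0 < ψ) (hd : 0 < d)
    (f : ℝ → ℝ)
    (hf : ∀ v, f v = ψ * Real.sqrt d * Real.sqrt (1 + v) - (1 + v))
    (vPlus : ℝ) (hvPlus : 0 ≤ vPlus) (hfix : f vPlus = vPlus)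
    (huniq : ∀ v : ℝ, 0 ≤ v → f v = v → v = vPlus) :
    ∀ v : ℝ, 0 ≤ v → -1 ≤ f v → (f (f v) ≤ v ↔ vPlus ≤ v) :=
  best_response_composition_monotone_general ψ d hψ hd f hf vPlus hvPlus hfix
end
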